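/- Let Λ ⊆ 𝕋 be a partition of 𝒳 by cells of the partition tree, and suppose there is a constant C₁ > 0 and s > 0 with ediam(I) ≤ C₁ ρ(I)^s for all I ∈ Λ. Then for every 0 < η < 1, #{I ∈ Λ : ε_I ≥ η} ≤ #{I ∈ Λ : ℰ_I ≥ η²} ≤ C₁^{2/(2s+1)} · η^{−2/(2s+1)}. -/

import Mathlib

open MeasureTheory Set ProbabilityTheory
open scoped BigOperators ENNReal NNReal

attribute [local instance] Classical.propDecidable

noncomputable section

/-- Euclidean space `ℝ^D`. -/
abbrev Euc (D : ℕ) : Type := EuclideanSpace ℝ (Fin D)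

/-- A partition tree on a subset `X` of `ℝ^D`, with branching number at most `a`.
Cells are abstract nodes; `cset I` is the subset of `ℝ^D` associated with the cell `I`,
`depth I` its depth, `parent I` its parent. -/
structure PartitionTree (D : ℕ) (X : Set (Euc D)) (a : ℕ) : Type 1 where
  Cell : Type
  cellCountable : Countable Cell
  cset : Cell → Set (Euc D)
  depth : Cell → ℕ
  parent : Cell → Cell
  root : Cell
  root_cset : cset root = X
  depth_root : depth root = 0
  parent_root : parent root = root
  eq_root_of_depth_eq_zero : ∀ I, depth I = 0 → I = root
  depth_parent : ∀ I, I ≠ root → depth (parent I) + 1 = depth I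
  level_finite : ∀ j : ℕ, {I | depth I = j}.Finite
  level_cover : ∀ j : ℕ, ⋃ I ∈ {I | depth I = j}, cset I = X
  level_disjoint : ∀ I J, depth I = depth J → I ≠ J → Disjoint (cset I) (cset J)
  cset_measurable : ∀ I, MeasurableSet (cset I)
  cset_eq_iUnion_children : ∀ I, cset I = ⋃ J ∈ {J | parent J = I ∧ J ≠ root}, cset J
  ncard_children_le : ∀ I, {J | parent J = I ∧ J ≠ root}.ncard ≤ a

namespace PartitionTree

variable {D : ℕ} {X : Set (Euc D)} {a : ℕ} (T : PartitionTree D X a)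

/-- The children of a cell. -/
def children (I : T.Cell) : Set T.Cell := {J | T.parent J = I ∧ J ≠ T.root}

/-- `descend k I` is the set `𝒞^k(I)` of `k`-th generation descendants of `I`. -/
def descend : ℕ → T.Cell → Set T.Cell
  | 0, I => {I}
  | k + 1, I => ⋃ J ∈ descend k I, T.children J

/-- A subtree: a family of cells containing the parent of each of its cells. -/
def IsSubtree (S : Set T.Cell) : Prop := ∀ I ∈ S, T.parent I ∈ S

/-- The outer leaves `Λ(𝒯)` of a subtree `𝒯`. -/
def outerLeaves (S : Set T.Cell) : Set T.Cell := {I | I ∉ S ∧ T.parent I ∈ S}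

end PartitionTree

/-- The essential diameter of a set `I` with respect to the measure `ρ`:
`ediam ρ I = inf { diam (I \ J) | J ⊆ I Borel, ρ J = 0 }`. -/
def ediam {D : ℕ} (ρ : Measure (Euc D)) (I : Set (Euc D)) : ℝ :=
  ⨅ J : {J : Set (Euc D) // MeasurableSet J ∧ J ⊆ I ∧ ρ J = 0},
    Metric.diam (I \ (J : Set (Euc D)))

namespace PartitionTree

variable {D : ℕ} {X : Set (Euc D)} {a : ℕ} (T : PartitionTree D X a)
  (ρ : Measure (Euc D)) (xstar : T.Cell → Euc D)

/-- The (population) center of mass `c_I` of a cell: `ρ(I)⁻¹ ∫_I x dρ(x)` if `ρ(I) > 0`,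
and the arbitrary fixed point `xstar I` otherwise. -/
def center (I : T.Cell) : Euc D :=
  if ρ (T.cset I) ≠ 0 then (ρ (T.cset I)).toReal⁻¹ • ∫ x in T.cset I, x ∂ρ else xstar I

/-- The local expected distortion `ℰ_I = ∫_I ‖x - c_I‖² dρ(x)`. -/
def cellErr (I : T.Cell) : ℝ := ∫ x in T.cset I, ‖x - T.center ρ xstar I‖ ^ 2 ∂ρ

/-- `ε_I² = ℰ_I - ∑_{J ∈ 𝒞(I)} ℰ_J`. -/
def epsSq (I : T.Cell) : ℝ :=
  T.cellErr ρ xstar I - ∑ᶠ J ∈ T.children I, T.cellErr ρ xstar J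

/-- `ε_I ≥ 0`, defined by `ε_I² = ℰ_I - ∑_{J ∈ 𝒞(I)} ℰ_J`. -/
def eps (I : T.Cell) : ℝ := Real.sqrt (T.epsSq ρ xstar I)

/-- The subtree `𝒯_η`. -/
def Teta (η : ℝ) : Set T.Cell :=
  if ∀ I, T.eps ρ xstar I < η then {T.root}
  else {I | ∃ k, ∃ J ∈ T.descend k I, η ≤ T.eps ρ xstar J}

/-- The nonlinear projection `P_Λ(x) = ∑_{I ∈ Λ} c_I 1_I(x)` associated with a family of
cells `Λ` and code vectors `c`. -/
def proj (c : T.Cell → Euc D) (Λ : Set T.Cell) (x : Euc D) : Euc D :=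
  ∑ᶠ I ∈ Λ, (T.cset I).indicator (fun _ => c I) x

variable {n : ℕ}

/-- The number `n_I` of sample points lying in the cell `I`. -/
def empCount (x : Fin n → Euc D) (I : T.Cell) : ℕ := {i | x i ∈ T.cset I}.ncard

/-- The empirical center of mass `ĉ_I` of a cell: the average of the sample points lying in
`I` if there are any, and the arbitrary fixed point `xhat I` otherwise. -/
def empCenter (xhat : T.Cell → Euc D) (x : Fin n → Euc D) (I : T.Cell) : Euc D :=
  if T.empCount x I ≠ 0 then
    ((T.empCount x I : ℝ))⁻¹ • ∑ᶠ i ∈ {i : Fin n | x i ∈ T.cset I}, x i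
  else xhat I

/-- The empirical local distortion `Ê_I = n⁻¹ ∑_{i : X_i ∈ I} ‖X_i - ĉ_I‖²`. -/
def empErr (xhat : T.Cell → Euc D) (x : Fin n → Euc D) (I : T.Cell) : ℝ :=
  (n : ℝ)⁻¹ * ∑ᶠ i ∈ {i : Fin n | x i ∈ T.cset I}, ‖x i - T.empCenter xhat x I‖ ^ 2

/-- `ε̂_I² = Ê_I - ∑_{J ∈ 𝒞(I)} Ê_J`. -/
def empEpsSq (xhat : T.Cell → Euc D) (x : Fin n → Euc D) (I : T.Cell) : ℝ :=
  T.empErr xhat x I - ∑ᶠ J ∈ T.children I, T.empErr xhat x J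

/-- `ε̂_I ≥ 0`, defined by `ε̂_I² = Ê_I - ∑_{J ∈ 𝒞(I)} Ê_J`. -/
def empEps (xhat : T.Cell → Euc D) (x : Fin n → Euc D) (I : T.Cell) : ℝ :=
  Real.sqrt (T.empEpsSq xhat x I)

/-- The empirical subtree `T̂_η`, truncated at depth `jn`. -/
def empTeta (xhat : T.Cell → Euc D) (x : Fin n → Euc D) (jn : ℕ) (η : ℝ) : Set T.Cell :=
  if ∀ I, T.depth I ≤ jn → T.empEps xhat x I < η then {T.root}
  else {I | ∃ k, ∃ J ∈ T.descend k I, T.depth J ≤ jn ∧ η ≤ T.empEps xhat x J}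

end PartitionTree

/-- Assumption A: `ediam(I) ≤ C₁ ρ(I)^s` and `ediam(I) ≤ C₂ b^{-j_I}` for every cell `I`. -/
def AssumptionA {D : ℕ} {X : Set (Euc D)} {a : ℕ} (T : PartitionTree D X a)
    (ρ : Measure (Euc D)) (b s C₁ C₂ : ℝ) : Prop :=
  ∀ I : T.Cell,
    ediam ρ (T.cset I) ≤ C₁ * (ρ (T.cset I)).toReal ^ s ∧
    ediam ρ (T.cset I) ≤ C₂ * b ^ (-(T.depth I : ℝ))

/-! The center of mass of a cell lies in the closed convex hull of the cell minus any null set, so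
`ℰ_I ≤ ediam(I)² ρ(I) ≤ C₁² ρ(I)^(2s+1)`. Hence every cell with `ℰ_I ≥ η²` has mass at least
`(η / C₁)^(2/(2s+1))`, and a probability measure has room for at most the reciprocal number of
disjoint such cells. Since the `ℰ_J` are nonnegative, `ε_I² ≤ ℰ_I`. -/

open Metric

theorem MeasureTheory.Measure.finite_and_ncard_mul_le_of_pairwiseDisjoint {α ι : Type*}
    [MeasurableSpace α] (μ : Measure α) [IsFiniteMeasure μ] {S : Set ι} {f : ι → Set α}
    (hf : ∀ i ∈ S, MeasurableSet (f i)) (hdisj : S.PairwiseDisjoint f) {m : ℝ} (hm : 0 < m)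
    (hle : ∀ i ∈ S, m ≤ μ.real (f i)) :
    S.Finite ∧ S.ncard * m ≤ μ.real univ := by
  have hF : ∀ F : Finset ι, ↑F ⊆ S → F.card * m ≤ μ.real univ := fun F hFS => calc
    F.card * m = ∑ _i ∈ F, m := by simp
    _ ≤ ∑ i ∈ F, μ.real (f i) := Finset.sum_le_sum fun i hi => hle i (hFS hi)
    _ = μ.real (⋃ i ∈ F, f i) :=
      (measureReal_biUnion_finset (hdisj.subset hFS) fun i hi => hf i (hFS hi)).symm
    _ ≤ μ.real univ := measureReal_mono (subset_univ _)
  have hfin : S.Finite := by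
    by_contra hinf
    obtain ⟨F, hFS, hcard⟩ := Set.Infinite.exists_subset_card_eq hinf (⌈μ.real univ / m⌉₊ + 1)
    have hbig := hF F hFS
    have hceil := (div_le_iff₀ hm).1 (Nat.le_ceil (μ.real univ / m))
    rw [hcard] at hbig
    push_cast at hbig
    linarith
  refine ⟨hfin, ?_⟩
  simpa [ncard_eq_toFinset_card S hfin] using hF hfin.toFinset (by simp)

theorem norm_sub_setAverage_le_diam {α E : Type*} [MeasurableSpace α] [NormedAddCommGroup E]
    [NormedSpace ℝ E] [CompleteSpace E] {μ : Measure α} {s : Set α} {t : Set E} {f : α → E}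
    (ht : Bornology.IsBounded t) (h0 : μ s ≠ 0) (hfin : μ s ≠ ∞)
    (hft : ∀ᵐ x ∂μ.restrict s, f x ∈ t) (hfi : IntegrableOn f s μ) {y : E} (hy : y ∈ t) :
    ‖y - ⨍ x in s, f x ∂μ‖ ≤ diam t := by
  have hmem : (⨍ x in s, f x ∂μ) ∈ closure (convexHull ℝ t) :=
    (convex_convexHull ℝ t).set_average_mem_closure h0 hfin
      (hft.mono fun _ hx => subset_convexHull ℝ t hx) hfi
  rw [← dist_eq_norm, ← convexHull_diam, ← diam_closure]
  exact dist_le_diam_of_mem (isBounded_convexHull.2 ht).closure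
    (subset_closure (subset_convexHull ℝ t hy)) hmem

theorem le_ediam {D : ℕ} {ρ : Measure (Euc D)} {s : Set (Euc D)} {r : ℝ}
    (h : ∀ J, MeasurableSet J → J ⊆ s → ρ J = 0 → r ≤ diam (s \ J)) : r ≤ ediam ρ s :=
  have : Nonempty {J : Set (Euc D) // MeasurableSet J ∧ J ⊆ s ∧ ρ J = 0} :=
    ⟨⟨∅, .empty, empty_subset s, measure_empty⟩⟩
  le_ciInf fun J => h J J.2.1 J.2.2.1 J.2.2.2

theorem ediam_nonneg {D : ℕ} (ρ : Measure (Euc D)) (s : Set (Euc D)) : 0 ≤ ediam ρ s :=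
  Real.iInf_nonneg fun _ => diam_nonneg

theorem setIntegral_norm_sub_setAverage_sq_le {D : ℕ} (ρ : Measure (Euc D)) [IsFiniteMeasure ρ]
    {s : Set (Euc D)} (hs : MeasurableSet s) (hsb : Bornology.IsBounded s) :
    ∫ x in s, ‖x - ⨍ y in s, y ∂ρ‖ ^ 2 ∂ρ ≤ ediam ρ s ^ 2 * ρ.real s := by
  set E := ∫ x in s, ‖x - ⨍ y in s, y ∂ρ‖ ^ 2 ∂ρ
  rcases eq_or_ne (ρ s) 0 with h0 | h0
  · simp [E, measureReal_def, h0]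
  have hpos : 0 < ρ.real s := ENNReal.toReal_pos h0 (measure_ne_top ρ s)
  have hid : IntegrableOn (fun y : Euc D => y) s ρ := by
    obtain ⟨R, hR⟩ := isBounded_iff_forall_norm_le.1 hsb
    exact Measure.integrableOn_of_bounded (measure_ne_top ρ s) aestronglyMeasurable_id
      (ae_restrict_of_forall_mem hs hR)
  have hJ : ∀ J, MeasurableSet J → J ⊆ s → ρ J = 0 → E ≤ diam (s \ J) ^ 2 * ρ.real s := by
    intro J _ _ hJ0
    have hmem : ∀ᵐ x ∂ρ.restrict s, x ∈ s \ J := by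
      filter_upwards [ae_restrict_mem hs, ae_restrict_of_ae (measure_eq_zero_iff_ae_notMem.1 hJ0)]
        with x hxs hxJ using ⟨hxs, hxJ⟩
    have hle : ∀ᵐ x ∂ρ.restrict s, ‖‖x - ⨍ y in s, y ∂ρ‖ ^ 2‖ ≤ diam (s \ J) ^ 2 := by
      filter_upwards [hmem] with x hx
      rw [norm_pow, norm_norm]
      exact pow_le_pow_left₀ (norm_nonneg _)
        (norm_sub_setAverage_le_diam (hsb.subset sdiff_subset) h0 (measure_ne_top ρ s)
          hmem hid hx) 2
    exact (Real.le_norm_self E).trans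
      (norm_setIntegral_le_of_norm_le_const_ae (measure_lt_top ρ s) hle)
  have hE : 0 ≤ E := setIntegral_nonneg hs fun x _ => by positivity
  have hroot : √(E / ρ.real s) ≤ ediam ρ s := le_ediam fun J hJm hJs hJ0 =>
    Real.sqrt_le_iff.2 ⟨diam_nonneg, (div_le_iff₀ hpos).2 (hJ J hJm hJs hJ0)⟩
  calc E = √(E / ρ.real s) ^ 2 * ρ.real s := by
        rw [Real.sq_sqrt (by positivity), div_mul_cancel₀ E hpos.ne']
    _ ≤ ediam ρ s ^ 2 * ρ.real s := by gcongr

theorem Real.inv_rpow_mul_rpow_le_of_sq_le {C η s x : ℝ} (hC : 0 < C) (hη : 0 < η)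
    (hs : 0 < 2 * s + 1) (hx : 0 ≤ x) (h : η ^ 2 ≤ (C * x ^ s) ^ 2 * x) :
    (C ^ ((2 : ℝ) / (2 * s + 1)) * η ^ (-(2 : ℝ) / (2 * s + 1)))⁻¹ ≤ x := by
  set p := 2 * s + 1
  set N := C ^ ((2 : ℝ) / p) * η ^ (-(2 : ℝ) / p)
  have hN : 0 < N := by positivity
  have hNp : N ^ p = C ^ 2 / η ^ 2 := by
    rw [Real.mul_rpow (by positivity) (by positivity), ← Real.rpow_mul hC.le,
      ← Real.rpow_mul hη.le, div_mul_cancel₀ _ hs.ne', div_mul_cancel₀ _ hs.ne',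
      Real.rpow_neg hη.le, div_eq_mul_inv]
    norm_cast
  have hxp : η ^ 2 ≤ C ^ 2 * x ^ p := by
    have : (x ^ s) ^ 2 * x = x ^ p := by
      rw [Real.rpow_add' hx hs.ne', Real.rpow_one, mul_comm 2 s, Real.rpow_mul hx]
      norm_cast
    rw [← this]
    linarith [h]
  have hone : (1 : ℝ) ^ p ≤ (N * x) ^ p := by
    rw [Real.one_rpow, Real.mul_rpow hN.le hx, hNp, div_mul_eq_mul_div, one_le_div (by positivity)]
    exact hxp
  rw [inv_le_iff_one_le_mul₀' hN]
  exact (Real.rpow_le_rpow_iff zero_le_one (by positivity) hs).1 hone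

namespace PartitionTree

variable {D : ℕ} {X : Set (Euc D)} {a : ℕ} (T : PartitionTree D X a)
  (ρ : Measure (Euc D)) (xstar : T.Cell → Euc D)

theorem cset_subset (I : T.Cell) : T.cset I ⊆ X :=
  fun _ hx => (T.level_cover (T.depth I)).le (mem_biUnion (Eq.refl (T.depth I)) hx)

theorem cellErr_nonneg (I : T.Cell) : 0 ≤ T.cellErr ρ xstar I :=
  integral_nonneg fun _ => by positivity

theorem cellErr_eq_setIntegral_norm_sub_setAverage_sq (I : T.Cell) :
    T.cellErr ρ xstar I = ∫ x in T.cset I, ‖x - ⨍ y in T.cset I, y ∂ρ‖ ^ 2 ∂ρ := by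
  rcases eq_or_ne (ρ (T.cset I)) 0 with h0 | h0
  -- on a null cell both integrals vanish, whatever the fallback point `xstar I`
  · simp [cellErr, Measure.restrict_eq_zero.2 h0]
  · rw [cellErr, center, if_pos h0, setAverage_eq]
    rfl

theorem cellErr_le_ediam_sq_mul [IsFiniteMeasure ρ] {I : T.Cell}
    (hI : Bornology.IsBounded (T.cset I)) :
    T.cellErr ρ xstar I ≤ ediam ρ (T.cset I) ^ 2 * ρ.real (T.cset I) := by
  rw [cellErr_eq_setIntegral_norm_sub_setAverage_sq]
  exact setIntegral_norm_sub_setAverage_sq_le ρ (T.cset_measurable I) hI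

theorem sq_le_cellErr_of_le_eps {η : ℝ} (hη : 0 < η) {I : T.Cell} (h : η ≤ T.eps ρ xstar I) :
    η ^ 2 ≤ T.cellErr ρ xstar I := by
  have hchildren : 0 ≤ ∑ᶠ J ∈ T.children I, T.cellErr ρ xstar J :=
    finsum_nonneg fun J => finsum_nonneg fun _ => T.cellErr_nonneg ρ xstar J
  have := (Real.le_sqrt' hη).1 h
  rw [epsSq] at this
  linarith

theorem inv_rpow_mul_rpow_le_measureReal_of_sq_le_cellErr [IsFiniteMeasure ρ] {I : T.Cell}
    (hI : Bornology.IsBounded (T.cset I)) {s C η : ℝ} (hC : 0 < C) (hη : 0 < η)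
    (hs : 0 < 2 * s + 1) (hed : ediam ρ (T.cset I) ≤ C * ρ.real (T.cset I) ^ s)
    (hE : η ^ 2 ≤ T.cellErr ρ xstar I) :
    (C ^ ((2 : ℝ) / (2 * s + 1)) * η ^ (-(2 : ℝ) / (2 * s + 1)))⁻¹ ≤ ρ.real (T.cset I) := by
  refine Real.inv_rpow_mul_rpow_le_of_sq_le hC hη hs measureReal_nonneg ?_
  calc η ^ 2 ≤ T.cellErr ρ xstar I := hE
    _ ≤ ediam ρ (T.cset I) ^ 2 * ρ.real (T.cset I) := T.cellErr_le_ediam_sq_mul ρ xstar hI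
    _ ≤ (C * ρ.real (T.cset I) ^ s) ^ 2 * ρ.real (T.cset I) := by
      gcongr
      exact ediam_nonneg ρ _

end PartitionTree

theorem stmt_5_general {D : ℕ} {X : Set (Euc D)} {a : ℕ} (T : PartitionTree D X a)
    (hXb : Bornology.IsBounded X)
    (ρ : Measure (Euc D)) [IsProbabilityMeasure ρ]
    (xstar : T.Cell → Euc D)
    (s C₁ : ℝ) (hs : 0 < s) (hC₁ : 0 < C₁)
    (Λ : Set T.Cell)
    (hdisj : ∀ I ∈ Λ, ∀ J ∈ Λ, I ≠ J → Disjoint (T.cset I) (T.cset J))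
    (hediam : ∀ I ∈ Λ, ediam ρ (T.cset I) ≤ C₁ * (ρ (T.cset I)).toReal ^ s)
    (η : ℝ) (hη0 : 0 < η) :
    {I ∈ Λ | η ≤ T.eps ρ xstar I}.Finite ∧
    {I ∈ Λ | η ^ 2 ≤ T.cellErr ρ xstar I}.Finite ∧
    {I ∈ Λ | η ≤ T.eps ρ xstar I}.ncard ≤ {I ∈ Λ | η ^ 2 ≤ T.cellErr ρ xstar I}.ncard ∧
    ({I ∈ Λ | η ^ 2 ≤ T.cellErr ρ xstar I}.ncard : ℝ) ≤
      C₁ ^ ((2 : ℝ) / (2 * s + 1)) * η ^ (-(2 : ℝ) / (2 * s + 1)) := by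
  have hN : 0 < C₁ ^ ((2 : ℝ) / (2 * s + 1)) * η ^ (-(2 : ℝ) / (2 * s + 1)) := by positivity
  have hsub : {I ∈ Λ | η ≤ T.eps ρ xstar I} ⊆ {I ∈ Λ | η ^ 2 ≤ T.cellErr ρ xstar I} :=
    fun I hI => ⟨hI.1, T.sq_le_cellErr_of_le_eps ρ xstar hη0 hI.2⟩
  obtain ⟨hfin, hcard⟩ := ρ.finite_and_ncard_mul_le_of_pairwiseDisjoint
    (S := {I ∈ Λ | η ^ 2 ≤ T.cellErr ρ xstar I}) (fun I _ => T.cset_measurable I)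
    (fun I hI J hJ hIJ => hdisj I hI.1 J hJ.1 hIJ)
    (inv_pos.2 hN) fun I hI => T.inv_rpow_mul_rpow_le_measureReal_of_sq_le_cellErr ρ xstar
      (hXb.subset (T.cset_subset I)) hC₁ hη0 (by linarith) (hediam I hI.1) hI.2
  rw [probReal_univ, mul_inv_le_iff₀ hN, one_mul] at hcard
  exact ⟨hfin.subset hsub, hfin, ncard_le_ncard hsub hfin, hcard⟩

theorem stmt_5 {D : ℕ} {X : Set (Euc D)} {a : ℕ} (ha : 1 ≤ a) (T : PartitionTree D X a)
    (hX0 : (0 : Euc D) ∈ X) (hXb : Bornology.IsBounded X) (hXd : Metric.diam X ≤ 1)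
    (ρ : Measure (Euc D)) [IsProbabilityMeasure ρ] (hρX : ρ Xᶜ = 0)
    (xstar : T.Cell → Euc D) (hxstar : ∀ I, xstar I ∈ X)
    (s C₁ : ℝ) (hs : 0 < s) (hC₁ : 0 < C₁)
    (Λ : Set T.Cell)
    (hcover : (⋃ I ∈ Λ, T.cset I) = X)
    (hdisj : ∀ I ∈ Λ, ∀ J ∈ Λ, I ≠ J → Disjoint (T.cset I) (T.cset J))
    (hediam : ∀ I ∈ Λ, ediam ρ (T.cset I) ≤ C₁ * (ρ (T.cset I)).toReal ^ s)
    (η : ℝ) (hη0 : 0 < η) (hη1 : η < 1) :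
    {I ∈ Λ | η ≤ T.eps ρ xstar I}.Finite ∧
    {I ∈ Λ | η ^ 2 ≤ T.cellErr ρ xstar I}.Finite ∧
    {I ∈ Λ | η ≤ T.eps ρ xstar I}.ncard ≤ {I ∈ Λ | η ^ 2 ≤ T.cellErr ρ xstar I}.ncard ∧
    ({I ∈ Λ | η ^ 2 ≤ T.cellErr ρ xstar I}.ncard : ℝ) ≤
      C₁ ^ ((2 : ℝ) / (2 * s + 1)) * η ^ (-(2 : ℝ) / (2 * s + 1)) :=
  stmt_5_general T hXb ρ xstar s C₁ hs hC₁ Λ hdisj hediam η hη0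

end
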